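/- Let λ be the Cauchy probability measure on ℝ and let β ∈ L²(λ) be orthogonal to the translation subspace 𝒯 = span{ ρ ↦ 1, ρ ↦ (ρ²−1)/(ρ²+1), ρ ↦ 2ρ/(ρ²+1) }, i.e. ∫ β t dλ = 0 for each of the three spanning functions t. Then for every g ∈ SL(2,ℝ), the function T′(g)β, defined λ-a.e. by (T′(g)β)(ρ) = κ_g(ρ)^{-2} β(ρ·g), is again orthogonal to 𝒯. Thus the annihilator 𝒮′ of 𝒯 is invariant under the dual action T′ (whereas under T the proper-supertranslation subspace is not invariant). -/

import Mathlib

open MeasureTheory Matrix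

noncomputable section

/-- `SL(2,ℝ)`, the group of real 2×2 matrices of determinant 1. -/
abbrev SL2 := Matrix.SpecialLinearGroup (Fin 2) ℝ

/-- The Cauchy probability measure on `ℝ`, with density `ρ ↦ 1/(π(1+ρ²))` with
respect to Lebesgue measure. -/
def cauchyM : Measure ℝ :=
  volume.withDensity fun ρ => ENNReal.ofReal (1 / (Real.pi * (1 + ρ ^ 2)))

/-- The Möbius right action `ρ·g = (aρ+c)/(bρ+d)` of `g = [[a,b],[c,d]] ∈ SL(2,ℝ)`
on `ℝ` (here `a = g 0 0`, `b = g 0 1`, `c = g 1 0`, `d = g 1 1`). -/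
def mob (g : SL2) (ρ : ℝ) : ℝ :=
  (g.1 0 0 * ρ + g.1 1 0) / (g.1 0 1 * ρ + g.1 1 1)

/-- The factor `κ_g(ρ) = ((aρ+c)² + (bρ+d)²)/(ρ²+1)`. -/
def kappa (g : SL2) (ρ : ℝ) : ℝ :=
  ((g.1 0 0 * ρ + g.1 1 0) ^ 2 + (g.1 0 1 * ρ + g.1 1 1) ^ 2) / (ρ ^ 2 + 1)

/-!
The Cauchy measure is quasi-invariant under the Möbius action with factor `κ_g`:
`∫ κ_g(ρ)⁻¹ F(ρ·g) dλ(ρ) = ∫ F dλ`, since `ρ ↦ ρ·g` has Lebesgue Jacobian `(bρ+d)⁻²` and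
`(bρ+d)² (1 + (ρ·g)²) = κ_g(ρ) (1 + ρ²)`. The space `𝒯` consists of the functions
`p(ρ)/(ρ²+1)` with `p` a polynomial of degree at most two, and `κ_g⁻¹ · p(ρ)/(ρ²+1)` is again of
this form as a function of `ρ·g`. So pairing `T′(g)β` with an element of `𝒯` is pairing `β` with
another element of `𝒯`.
-/

def mobNum (g : SL2) (ρ : ℝ) : ℝ := g.1 0 0 * ρ + g.1 1 0

def mobDen (g : SL2) (ρ : ℝ) : ℝ := g.1 0 1 * ρ + g.1 1 1

lemma mob_eq_div (g : SL2) (ρ : ℝ) : mob g ρ = mobNum g ρ / mobDen g ρ := rfl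

lemma kappa_eq (g : SL2) (ρ : ℝ) :
    kappa g ρ = (mobNum g ρ ^ 2 + mobDen g ρ ^ 2) / (ρ ^ 2 + 1) := rfl

lemma SL2.det_eq (g : SL2) : g.1 0 0 * g.1 1 1 - g.1 0 1 * g.1 1 0 = 1 := by
  have h := Matrix.SpecialLinearGroup.det_coe g
  rwa [Matrix.det_fin_two] at h

lemma mobNum_inv (g : SL2) (σ : ℝ) : mobNum g⁻¹ σ = g.1 1 1 * σ - g.1 1 0 := by
  simp [mobNum, Matrix.SpecialLinearGroup.coe_inv, Matrix.adjugate_fin_two]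
  ring

lemma mobDen_inv (g : SL2) (σ : ℝ) : mobDen g⁻¹ σ = g.1 0 0 - g.1 0 1 * σ := by
  simp [mobDen, Matrix.SpecialLinearGroup.coe_inv, Matrix.adjugate_fin_two]
  ring

lemma volume_mobDen_eq_zero (g : SL2) : volume {ρ | mobDen g ρ = 0} = 0 := by
  refine Set.Subsingleton.measure_zero (fun x hx y hy => ?_) _
  by_contra hxy
  have hb : g.1 0 1 = 0 := by
    simp only [Set.mem_ofPred_eq, mobDen] at hx hy
    exact (mul_eq_zero.1 (by linear_combination hx - hy : g.1 0 1 * (x - y) = 0)).resolve_right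
      (sub_ne_zero.2 hxy)
  have hd : g.1 1 1 = 0 := by simpa [mobDen, hb] using hx
  simpa [hb, hd] using SL2.det_eq g

lemma ae_mobDen_ne_zero (g : SL2) : ∀ᵐ ρ, mobDen g ρ ≠ 0 :=
  measure_mono_null (fun _ h => not_not.1 h) (volume_mobDen_eq_zero g)

lemma mob_hasDerivAt (g : SL2) {ρ : ℝ} (hρ : mobDen g ρ ≠ 0) :
    HasDerivAt (mob g) (mobDen g ρ ^ 2)⁻¹ ρ := by
  have hN : HasDerivAt (mobNum g) (g.1 0 0) ρ :=
    (((hasDerivAt_id ρ).const_mul (g.1 0 0)).add_const (g.1 1 0)).congr_deriv (mul_one _)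
  have hD : HasDerivAt (mobDen g) (g.1 0 1) ρ :=
    (((hasDerivAt_id ρ).const_mul (g.1 0 1)).add_const (g.1 1 1)).congr_deriv (mul_one _)
  refine (hN.div hD hρ).congr_deriv ?_
  rw [div_eq_iff (pow_ne_zero 2 hρ), inv_mul_cancel₀ (pow_ne_zero 2 hρ)]
  simp only [mobNum, mobDen]
  linear_combination SL2.det_eq g

lemma mob_injOn (g : SL2) : Set.InjOn (mob g) {ρ | mobDen g ρ ≠ 0} := by
  intro x hx y hy hxy
  rw [mob_eq_div, mob_eq_div, div_eq_div_iff hx hy] at hxy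
  simp only [mobNum, mobDen] at hxy
  linear_combination hxy - (x - y) * SL2.det_eq g

lemma mobDen_mob_inv (g : SL2) {σ : ℝ} (hσ : mobDen g⁻¹ σ ≠ 0) :
    mobDen g (mob g⁻¹ σ) = (mobDen g⁻¹ σ)⁻¹ := by
  rw [mob_eq_div, mobNum_inv, mobDen_inv] at *
  simp only [mobDen]
  field_simp
  linear_combination SL2.det_eq g

lemma mob_mob_inv (g : SL2) {σ : ℝ} (hσ : mobDen g⁻¹ σ ≠ 0) : mob g (mob g⁻¹ σ) = σ := by
  rw [mob_eq_div g, mobDen_mob_inv g hσ, div_inv_eq_mul]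
  rw [mob_eq_div, mobNum_inv, mobDen_inv] at *
  simp only [mobNum]
  rw [add_mul, mul_assoc, div_mul_cancel₀ _ hσ]
  linear_combination σ * SL2.det_eq g

lemma integral_comp_mob (g : SL2) (G : ℝ → ℝ) :
    ∫ ρ, (mobDen g ρ ^ 2)⁻¹ * G (mob g ρ) = ∫ σ, G σ := by
  set s := {ρ | mobDen g ρ ≠ 0}
  have hs : MeasurableSet s :=
    (isOpen_ne_fun (by unfold mobDen; fun_prop) continuous_const).measurableSet
  have hs_ae : ∀ᵐ ρ, ρ ∈ s := ae_mobDen_ne_zero g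
  have himage_ae : ∀ᵐ σ, σ ∈ mob g '' s := by
    filter_upwards [ae_mobDen_ne_zero g⁻¹] with σ hσ
    exact ⟨mob g⁻¹ σ, by simp [s, mobDen_mob_inv g hσ, hσ], mob_mob_inv g hσ⟩
  have hcov := integral_image_eq_integral_abs_deriv_smul hs
    (fun ρ hρ => (mob_hasDerivAt g hρ).hasDerivWithinAt) (mob_injOn g) G
  rw [Measure.restrict_eq_self_of_ae_mem himage_ae,
    Measure.restrict_eq_self_of_ae_mem hs_ae] at hcov
  rw [hcov]
  simp only [smul_eq_mul, abs_inv, abs_sq]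

lemma integral_cauchyM (h : ℝ → ℝ) :
    ∫ ρ, h ρ ∂cauchyM = ∫ ρ, (Real.pi * (1 + ρ ^ 2))⁻¹ * h ρ := by
  rw [cauchyM, integral_withDensity_eq_integral_toReal_smul (by fun_prop)
    (ae_of_all _ fun _ => ENNReal.ofReal_lt_top)]
  congr with ρ
  rw [ENNReal.toReal_ofReal (by positivity), smul_eq_mul, one_div]

instance : IsProbabilityMeasure cauchyM := by
  have hint : Integrable fun ρ : ℝ => 1 / (Real.pi * (1 + ρ ^ 2)) := by
    simpa only [one_div, mul_inv] using integrable_inv_one_add_sq.const_mul Real.pi⁻¹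
  constructor
  rw [cauchyM, withDensity_apply _ MeasurableSet.univ, Measure.restrict_univ,
    ← ofReal_integral_eq_lintegral_ofReal hint (ae_of_all _ fun _ => by positivity)]
  simp only [one_div, mul_inv, integral_const_mul, integral_univ_inv_one_add_sq,
    inv_mul_cancel₀ Real.pi_ne_zero, ENNReal.ofReal_one]

lemma mobDen_sq_mul_one_add_mob_sq (g : SL2) {ρ : ℝ} (hρ : mobDen g ρ ≠ 0) :
    mobDen g ρ ^ 2 * (1 + mob g ρ ^ 2) = kappa g ρ * (1 + ρ ^ 2) := by
  rw [mob_eq_div, kappa_eq]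
  field_simp
  ring

lemma integral_cauchyM_comp_mob (g : SL2) (G : ℝ → ℝ) :
    ∫ ρ, (kappa g ρ)⁻¹ * G (mob g ρ) ∂cauchyM = ∫ σ, G σ ∂cauchyM := by
  rw [integral_cauchyM, integral_cauchyM]
  conv_rhs => rw [← integral_comp_mob g]
  refine integral_congr_ae ?_
  filter_upwards [ae_mobDen_ne_zero g] with ρ hρ
  rw [← mul_assoc, ← mul_assoc, ← mul_inv, ← mul_inv, mul_left_comm,
    mobDen_sq_mul_one_add_mob_sq g hρ]
  ring

def quadRatio (p₀ p₁ p₂ ρ : ℝ) : ℝ := (p₀ + p₁ * ρ + p₂ * ρ ^ 2) / (ρ ^ 2 + 1)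

@[simp] lemma quadRatio_one_zero_one (ρ : ℝ) : quadRatio 1 0 1 ρ = 1 := by
  rw [quadRatio, div_eq_one_iff_eq (by positivity)]
  ring

@[simp] lemma quadRatio_neg_one_zero_one (ρ : ℝ) :
    quadRatio (-1) 0 1 ρ = (ρ ^ 2 - 1) / (ρ ^ 2 + 1) := by
  rw [quadRatio]
  ring

@[simp] lemma quadRatio_zero_two_zero (ρ : ℝ) : quadRatio 0 2 0 ρ = 2 * ρ / (ρ ^ 2 + 1) := by
  rw [quadRatio]
  ring

lemma abs_quadRatio_le (p₀ p₁ p₂ ρ : ℝ) : |quadRatio p₀ p₁ p₂ ρ| ≤ |p₀| + |p₁| + |p₂| := by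
  have hpos : 0 < ρ ^ 2 + 1 := by positivity
  have hρ : |ρ| ≤ ρ ^ 2 + 1 := by nlinarith [sq_abs ρ, abs_nonneg ρ]
  rw [quadRatio, abs_div, abs_of_pos hpos, div_le_iff₀ hpos]
  calc |p₀ + p₁ * ρ + p₂ * ρ ^ 2| ≤ |p₀| + |p₁| * |ρ| + |p₂| * ρ ^ 2 := by
        refine (abs_add_three _ _ _).trans_eq ?_
        rw [abs_mul, abs_mul, abs_of_nonneg (sq_nonneg ρ)]
    _ ≤ (|p₀| + |p₁| + |p₂|) * (ρ ^ 2 + 1) := by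
        nlinarith [abs_nonneg p₀, abs_nonneg p₁, abs_nonneg p₂, sq_nonneg ρ]

lemma integrable_mul_quadRatio {β : ℝ → ℝ} (hβ : Integrable β cauchyM) (p₀ p₁ p₂ : ℝ) :
    Integrable (fun ρ => β ρ * quadRatio p₀ p₁ p₂ ρ) cauchyM :=
  hβ.mul_bdd (by unfold quadRatio; fun_prop : Measurable _).aestronglyMeasurable
    (ae_of_all _ fun ρ => abs_quadRatio_le p₀ p₁ p₂ ρ)

lemma integral_mul_quadRatio_eq_zero {β : ℝ → ℝ} (hβ : Integrable β cauchyM)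
    (h1 : ∫ ρ, β ρ * 1 ∂cauchyM = 0)
    (h2 : ∫ ρ, β ρ * ((ρ ^ 2 - 1) / (ρ ^ 2 + 1)) ∂cauchyM = 0)
    (h3 : ∫ ρ, β ρ * (2 * ρ / (ρ ^ 2 + 1)) ∂cauchyM = 0) (p₀ p₁ p₂ : ℝ) :
    ∫ ρ, β ρ * quadRatio p₀ p₁ p₂ ρ ∂cauchyM = 0 := by
  have e1 := (integrable_mul_quadRatio hβ 1 0 1).const_mul ((p₀ + p₂) / 2)
  have e2 := (integrable_mul_quadRatio hβ (-1) 0 1).const_mul ((p₂ - p₀) / 2)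
  have e3 := (integrable_mul_quadRatio hβ 0 2 0).const_mul (p₁ / 2)
  have hsplit : (fun ρ => β ρ * quadRatio p₀ p₁ p₂ ρ) = fun ρ =>
      (p₀ + p₂) / 2 * (β ρ * quadRatio 1 0 1 ρ) + (p₂ - p₀) / 2 * (β ρ * quadRatio (-1) 0 1 ρ)
        + p₁ / 2 * (β ρ * quadRatio 0 2 0 ρ) := by
    ext ρ
    simp only [quadRatio]
    ring
  rw [hsplit, integral_add (by exact e1.add e2) e3, integral_add e1 e2, integral_const_mul,
    integral_const_mul, integral_const_mul]
  simp only [quadRatio_one_zero_one, quadRatio_neg_one_zero_one, quadRatio_zero_two_zero, h1, h2,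
    h3, mul_zero, add_zero]

lemma quadRatio_div (q₀ q₁ q₂ : ℝ) {N D : ℝ} (hD : D ≠ 0) :
    quadRatio q₀ q₁ q₂ (N / D) = (q₀ * D ^ 2 + q₁ * N * D + q₂ * N ^ 2) / (N ^ 2 + D ^ 2) := by
  rw [quadRatio]
  field_simp

lemma exists_kappa_inv_mul_quadRatio (g : SL2) (p₀ p₁ p₂ : ℝ) :
    ∃ q₀ q₁ q₂ : ℝ, ∀ ρ, mobDen g ρ ≠ 0 →
      (kappa g ρ)⁻¹ * quadRatio p₀ p₁ p₂ ρ = quadRatio q₀ q₁ q₂ (mob g ρ) := by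
  set a := g.1 0 0
  set b := g.1 0 1
  set c := g.1 1 0
  set d := g.1 1 1
  -- `q₀ + q₁σ + q₂σ² = p₀(a - bσ)² + p₁(dσ - c)(a - bσ) + p₂(dσ - c)²`, the homogenised
  -- pullback of `p` along `σ ↦ σ·g⁻¹`.
  refine ⟨p₀ * a ^ 2 - p₁ * a * c + p₂ * c ^ 2,
    -2 * p₀ * a * b + p₁ * (a * d + b * c) - 2 * p₂ * c * d,
    p₀ * b ^ 2 - p₁ * b * d + p₂ * d ^ 2, fun ρ hρ => ?_⟩
  have hA : a * mobDen g ρ - b * mobNum g ρ = 1 := by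
    simp only [mobNum, mobDen]
    linear_combination SL2.det_eq g
  have hD : d * mobNum g ρ - c * mobDen g ρ = ρ := by
    simp only [mobNum, mobDen]
    linear_combination ρ * SL2.det_eq g
  rw [mob_eq_div, quadRatio_div _ _ _ hρ, kappa_eq, inv_div, quadRatio,
    div_mul_div_cancel₀' (by positivity)]
  congr 1
  calc p₀ + p₁ * ρ + p₂ * ρ ^ 2
      = p₀ * (a * mobDen g ρ - b * mobNum g ρ) ^ 2
        + p₁ * (d * mobNum g ρ - c * mobDen g ρ) * (a * mobDen g ρ - b * mobNum g ρ)
        + p₂ * (d * mobNum g ρ - c * mobDen g ρ) ^ 2 := by rw [hA, hD]; ring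
    _ = _ := by ring

lemma cauchyM_absolutelyContinuous : cauchyM ≪ volume :=
  withDensity_absolutelyContinuous _ _

lemma integral_dual_action_mul_quadRatio_eq_zero (g : SL2) {β : ℝ → ℝ}
    (hβ : ∀ q₀ q₁ q₂, ∫ σ, β σ * quadRatio q₀ q₁ q₂ σ ∂cauchyM = 0) (p₀ p₁ p₂ : ℝ) :
    ∫ ρ, (kappa g ρ ^ 2)⁻¹ * β (mob g ρ) * quadRatio p₀ p₁ p₂ ρ ∂cauchyM = 0 := by
  obtain ⟨q₀, q₁, q₂, hq⟩ := exists_kappa_inv_mul_quadRatio g p₀ p₁ p₂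
  calc ∫ ρ, (kappa g ρ ^ 2)⁻¹ * β (mob g ρ) * quadRatio p₀ p₁ p₂ ρ ∂cauchyM
      = ∫ ρ, (kappa g ρ)⁻¹ * (β (mob g ρ) * quadRatio q₀ q₁ q₂ (mob g ρ)) ∂cauchyM := by
        refine integral_congr_ae ?_
        filter_upwards [cauchyM_absolutelyContinuous.ae_le (ae_mobDen_ne_zero g)] with ρ hρ
        rw [← hq ρ hρ, sq, mul_inv]
        ring
    _ = ∫ σ, β σ * quadRatio q₀ q₁ q₂ σ ∂cauchyM := integral_cauchyM_comp_mob g fun σ => β σ * quadRatio q₀ q₁ q₂ σ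
    _ = 0 := hβ q₀ q₁ q₂

/-- If `β ∈ L²(λ)` is orthogonal to the translation subspace
`𝒯 = span{ρ ↦ 1, ρ ↦ (ρ²−1)/(ρ²+1), ρ ↦ 2ρ/(ρ²+1)}`, then for every `g ∈ SL(2,ℝ)`
the function `T′(g)β`, `(T′(g)β)(ρ) = κ_g(ρ)⁻² β(ρ·g)`, is again orthogonal to `𝒯`:
the annihilator `𝒮′` of `𝒯` is invariant under the dual action `T′`. -/
theorem dual_action_preserves_annihilator_of_translations
    (β : ℝ → ℝ) (hβ : MemLp β 2 cauchyM)
    (h1 : ∫ ρ, β ρ * 1 ∂cauchyM = 0)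
    (h2 : ∫ ρ, β ρ * ((ρ ^ 2 - 1) / (ρ ^ 2 + 1)) ∂cauchyM = 0)
    (h3 : ∫ ρ, β ρ * (2 * ρ / (ρ ^ 2 + 1)) ∂cauchyM = 0) :
    ∀ g : SL2,
      (∫ ρ, (kappa g ρ ^ 2)⁻¹ * β (mob g ρ) * 1 ∂cauchyM = 0) ∧
      (∫ ρ, (kappa g ρ ^ 2)⁻¹ * β (mob g ρ) * ((ρ ^ 2 - 1) / (ρ ^ 2 + 1)) ∂cauchyM = 0) ∧
      (∫ ρ, (kappa g ρ ^ 2)⁻¹ * β (mob g ρ) * (2 * ρ / (ρ ^ 2 + 1)) ∂cauchyM = 0) := by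
  intro g
  have hT := integral_mul_quadRatio_eq_zero (hβ.integrable one_le_two) h1 h2 h3
  have h := integral_dual_action_mul_quadRatio_eq_zero g hT
  refine ⟨?_, ?_, ?_⟩
  · simpa only [quadRatio_one_zero_one] using h 1 0 1
  · simpa only [quadRatio_neg_one_zero_one] using h (-1) 0 1
  · simpa only [quadRatio_zero_two_zero] using h 0 2 0
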